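/- Butterfly–block-diagonal equivalence: for N = 2^L with L ≥ 1, the N×N matrix (1/√2)·[[I_{N/2}, Ω_{N/2}],[I_{N/2}, −Ω_{N/2}]] equals P̃_N · D̃_N · P̃_N^T, where Ω_{N/2} is the diagonal matrix with entries e^{−2πi(c−1)/N} for c = 1,…,N/2, P̃_N is the odd-even permutation matrix, and D̃_N is the block diagonal matrix with N/2 diagonal blocks D̃_{N,c} = (1/√2)·[[1, e^{−2πi(c−1)/N}],[1, −e^{−2πi(c−1)/N}]] for c = 1,…,N/2. -/
import Mathlib


open Matrix Complex

/-- Cast a square matrix along an equality of sizes. -/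
noncomputable def castM {m n : ℕ} (h : m = n) (A : Matrix (Fin m) (Fin m) ℂ) :
    Matrix (Fin n) (Fin n) ℂ :=
  Matrix.reindex (finCongr h) (finCongr h) A

/-- Block diagonal matrix `diag(A, B)`. -/
noncomputable def blockDiag2 {m n : ℕ} (A : Matrix (Fin m) (Fin m) ℂ)
    (B : Matrix (Fin n) (Fin n) ℂ) : Matrix (Fin (m + n)) (Fin (m + n)) ℂ :=
  Matrix.reindex finSumFinEquiv finSumFinEquiv (Matrix.fromBlocks A 0 0 B)

/-- 2×2 block matrix `[[A, B],[C, D]]` with m×m blocks, as an `(m+m)×(m+m)` matrix. -/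
noncomputable def fromBlocks2 {m : ℕ} (A B C D : Matrix (Fin m) (Fin m) ℂ) :
    Matrix (Fin (m + m)) (Fin (m + m)) ℂ :=
  Matrix.reindex finSumFinEquiv finSumFinEquiv (Matrix.fromBlocks A B C D)

/-- Kronecker product of two square matrices, with row-major flattened indices. -/
noncomputable def kronF {m n : ℕ} (A : Matrix (Fin m) (Fin m) ℂ)
    (B : Matrix (Fin n) (Fin n) ℂ) : Matrix (Fin (m * n)) (Fin (m * n)) ℂ :=
  Matrix.reindex finProdFinEquiv finProdFinEquiv (Matrix.kroneckerMap (· * ·) A B)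

/-- The N×N DFT matrix, `[F_N]_{i,k} = e^{-2πi·i·k/N}/√N` (0-based indices). -/
noncomputable def dftMatrix (N : ℕ) : Matrix (Fin N) (Fin N) ℂ :=
  Matrix.of fun i k =>
    Complex.exp (-(2 * Real.pi * Complex.I) * ((i.val : ℂ) * (k.val : ℂ)) / (N : ℂ))
      / (Real.sqrt N : ℂ)

/-- The odd-even permutation matrix `P̃_N` (0-based indices):
`[P̃_N]_{i,k} = 1` iff (`2i < N` and `k = 2i`) or (`2i ≥ N` and `k = 2i+1−N`). -/
noncomputable def oddEvenPerm (N : ℕ) : Matrix (Fin N) (Fin N) ℂ :=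
  Matrix.of fun i k =>
    if (2 * i.val < N ∧ k.val = 2 * i.val) ∨ (N ≤ 2 * i.val ∧ k.val = 2 * i.val + 1 - N)
    then 1 else 0

/-- The block diagonal matrix `D̃_N = diag(D̃_{N,1},…,D̃_{N,N/2})` with 2×2 blocks
`D̃_{N,c} = (1/√2)·[[1, e^{−2πi(c−1)/N}],[1, −e^{−2πi(c−1)/N}]]` (0-based block index). -/
noncomputable def Dtilde (N : ℕ) : Matrix (Fin N) (Fin N) ℂ :=
  Matrix.of fun i k =>
    if i.val / 2 = k.val / 2 then
      (1 / (Real.sqrt 2 : ℂ)) *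
        (if k.val % 2 = 0 then 1
         else (if i.val % 2 = 0 then 1 else -1) *
            Complex.exp (-(2 * Real.pi * Complex.I) * ((i.val / 2 : ℕ) : ℂ) / (N : ℂ)))
    else 0

/-- The diagonal matrix `Ω_m = diag(1, ω, …, ω^{m−1})` with `ω = e^{−2πi/(2m)}`. -/
noncomputable def omegaMatrix (m : ℕ) : Matrix (Fin m) (Fin m) ℂ :=
  Matrix.diagonal fun c =>
    Complex.exp (-(2 * Real.pi * Complex.I) * ((c.val : ℕ) : ℂ) / ((2 * m : ℕ) : ℂ))


def sigmaOE (N : ℕ) (i : Fin N) : Fin N :=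
  ⟨if 2 * i.val < N then 2 * i.val else 2 * i.val + 1 - N, by have := i.isLt; split <;> omega⟩

lemma oddEvenPerm_apply (N : ℕ) (i k : Fin N) :
    oddEvenPerm N i k = if k = sigmaOE N i then 1 else 0 := by
  have hv : (sigmaOE N i).val = if 2 * i.val < N then 2 * i.val else 2 * i.val + 1 - N := rfl
  simp only [oddEvenPerm, Matrix.of_apply, Fin.ext_iff, hv]
  rcases Nat.lt_or_ge (2 * i.val) N with h | h
  · have h2 : ¬ (N ≤ 2 * i.val) := by omega
    rw [if_pos h]
    by_cases hk : k.val = 2 * i.val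
    · simp [hk, h, h2]
    · simp [hk, h2]
  · have h2 : ¬ (2 * i.val < N) := by omega
    rw [if_neg h2]
    by_cases hk : k.val = 2 * i.val + 1 - N
    · simp [hk, h, h2]
    · simp [hk, h2]

lemma conj_apply (N : ℕ) (A : Matrix (Fin N) (Fin N) ℂ) (i j : Fin N) :
    (oddEvenPerm N * A * (oddEvenPerm N)ᵀ) i j = A (sigmaOE N i) (sigmaOE N j) := by
  simp [Matrix.mul_apply, oddEvenPerm_apply, transpose_apply, ite_mul, mul_ite,
    Finset.sum_ite_eq, Finset.sum_ite_eq']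

lemma finSumFinEquiv_symm_lt {m n : ℕ} (i : Fin (m + n)) (h : i.val < m) :
    finSumFinEquiv.symm i = Sum.inl ⟨i.val, h⟩ := by
  rw [Equiv.symm_apply_eq]
  simp [finSumFinEquiv_apply_left, Fin.ext_iff]

lemma finSumFinEquiv_symm_ge {m n : ℕ} (i : Fin (m + n)) (h : m ≤ i.val) :
    finSumFinEquiv.symm i = Sum.inr ⟨i.val - m, by have := i.isLt; omega⟩ := by
  rw [Equiv.symm_apply_eq]
  simp [finSumFinEquiv_apply_right, Fin.ext_iff]
  omega

/-- **Butterfly–block-diagonal equivalence**: for `N = 2^(L+1)`,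
`(1/√2)·[[I, Ω],[I, −Ω]] = P̃_N · D̃_N · P̃_Nᵀ`. -/
theorem butterfly_eq_blockDiag (L : ℕ) :
    ((1 / (Real.sqrt 2 : ℂ)) •
        castM (show 2 ^ L + 2 ^ L = 2 ^ (L + 1) by ring)
          (fromBlocks2 1 (omegaMatrix (2 ^ L)) 1 (-omegaMatrix (2 ^ L))))
      = oddEvenPerm (2 ^ (L + 1)) * Dtilde (2 ^ (L + 1)) * (oddEvenPerm (2 ^ (L + 1)))ᵀ := by
  have hN2 : (2:ℕ) ^ (L + 1) = 2 ^ L + 2 ^ L := by rw [pow_succ]; ring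
  have hNmul : (2:ℕ) ^ (L + 1) = 2 * 2 ^ L := by rw [pow_succ]; ring
  have hcast : ((2 * 2 ^ L : ℕ) : ℂ) = ((2 ^ (L + 1) : ℕ) : ℂ) := by rw [hNmul]
  ext i j
  have hiN := i.isLt
  have hjN := j.isLt
  rw [Matrix.smul_apply, conj_apply, castM, Matrix.reindex_apply, Matrix.submatrix_apply,
      fromBlocks2, Matrix.reindex_apply, Matrix.submatrix_apply]
  rcases Nat.lt_or_ge i.val (2 ^ L) with hi | hi <;>
    rcases Nat.lt_or_ge j.val (2 ^ L) with hj | hj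
  · rw [finSumFinEquiv_symm_lt _ (show (((finCongr _).symm) i).val < 2 ^ L from hi),
        finSumFinEquiv_symm_lt _ (show (((finCongr _).symm) j).val < 2 ^ L from hj),
        Matrix.fromBlocks_apply₁₁]
    have hvi : (sigmaOE (2 ^ (L + 1)) i).val = 2 * i.val := by
      simp only [sigmaOE]; rw [if_pos (by omega)]
    have hvj : (sigmaOE (2 ^ (L + 1)) j).val = 2 * j.val := by
      simp only [sigmaOE]; rw [if_pos (by omega)]
    simp only [Dtilde, Matrix.of_apply, hvi, hvj, Matrix.one_apply, Fin.ext_iff,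
      Fin.mk.injEq, finCongr_symm, finCongr_apply, Fin.coe_cast]
    by_cases hij : i.val = j.val
    · rw [if_pos hij, if_pos (by omega), if_pos (by omega), smul_eq_mul]
    · rw [if_neg hij, if_neg (by omega)]
      simp
  · rw [finSumFinEquiv_symm_lt _ (show (((finCongr _).symm) i).val < 2 ^ L from hi),
        finSumFinEquiv_symm_ge _ (show 2 ^ L ≤ (((finCongr _).symm) j).val from hj),
        Matrix.fromBlocks_apply₁₂]
    have hvi : (sigmaOE (2 ^ (L + 1)) i).val = 2 * i.val := by
      simp only [sigmaOE]; rw [if_pos (by omega)]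
    have hvj : (sigmaOE (2 ^ (L + 1)) j).val = 2 * j.val + 1 - 2 ^ (L + 1) := by
      simp only [sigmaOE]; rw [if_neg (by omega)]
    simp only [Dtilde, Matrix.of_apply, hvi, hvj, omegaMatrix, Matrix.diagonal_apply,
      Fin.ext_iff, Fin.mk.injEq, finCongr_symm, finCongr_apply, Fin.coe_cast]
    have hdiv : (2 * j.val + 1 - 2 ^ (L + 1)) / 2 = j.val - 2 ^ L := by omega
    have hmod : (2 * j.val + 1 - 2 ^ (L + 1)) % 2 = 1 := by omega
    have hdivi : 2 * i.val / 2 = i.val := by omega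
    have hmodi : 2 * i.val % 2 = 0 := by omega
    rw [hdiv, hmod, hdivi, hmodi, hcast]
    by_cases hij : i.val = j.val - 2 ^ L
    · rw [if_pos hij, if_pos (by omega), if_pos rfl, smul_eq_mul, if_neg Nat.one_ne_zero, one_mul]
    · rw [if_neg hij, if_neg (by omega)]
      simp
  · rw [finSumFinEquiv_symm_ge _ (show 2 ^ L ≤ (((finCongr _).symm) i).val from hi),
        finSumFinEquiv_symm_lt _ (show (((finCongr _).symm) j).val < 2 ^ L from hj),
        Matrix.fromBlocks_apply₂₁]
    have hvi : (sigmaOE (2 ^ (L + 1)) i).val = 2 * i.val + 1 - 2 ^ (L + 1) := by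
      simp only [sigmaOE]; rw [if_neg (by omega)]
    have hvj : (sigmaOE (2 ^ (L + 1)) j).val = 2 * j.val := by
      simp only [sigmaOE]; rw [if_pos (by omega)]
    simp only [Dtilde, Matrix.of_apply, hvi, hvj, Matrix.one_apply, Fin.ext_iff,
      Fin.mk.injEq, finCongr_symm, finCongr_apply, Fin.coe_cast]
    have hdiv : (2 * i.val + 1 - 2 ^ (L + 1)) / 2 = i.val - 2 ^ L := by omega
    have hdivj : 2 * j.val / 2 = j.val := by omega
    have hmodj : 2 * j.val % 2 = 0 := by omega
    rw [hdiv, hdivj, hmodj]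
    by_cases hij : i.val - 2 ^ L = j.val
    · rw [if_pos (by omega), if_pos hij, if_pos rfl, smul_eq_mul]
    · rw [if_neg (by omega), if_neg hij]
      simp
  · rw [finSumFinEquiv_symm_ge _ (show 2 ^ L ≤ (((finCongr _).symm) i).val from hi),
        finSumFinEquiv_symm_ge _ (show 2 ^ L ≤ (((finCongr _).symm) j).val from hj),
        Matrix.fromBlocks_apply₂₂]
    have hvi : (sigmaOE (2 ^ (L + 1)) i).val = 2 * i.val + 1 - 2 ^ (L + 1) := by
      simp only [sigmaOE]; rw [if_neg (by omega)]
    have hvj : (sigmaOE (2 ^ (L + 1)) j).val = 2 * j.val + 1 - 2 ^ (L + 1) := by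
      simp only [sigmaOE]; rw [if_neg (by omega)]
    simp only [Dtilde, Matrix.of_apply, hvi, hvj, omegaMatrix, Matrix.neg_apply,
      Matrix.diagonal_apply, Fin.ext_iff, Fin.mk.injEq, finCongr_symm, finCongr_apply,
      Fin.coe_cast]
    have hdiv : (2 * i.val + 1 - 2 ^ (L + 1)) / 2 = i.val - 2 ^ L := by omega
    have hdivj : (2 * j.val + 1 - 2 ^ (L + 1)) / 2 = j.val - 2 ^ L := by omega
    have hmodi : (2 * i.val + 1 - 2 ^ (L + 1)) % 2 = 1 := by omega
    have hmodj : (2 * j.val + 1 - 2 ^ (L + 1)) % 2 = 1 := by omega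
    rw [hdiv, hdivj, hmodi, hmodj, hcast]
    by_cases hij : i.val - 2 ^ L = j.val - 2 ^ L
    · rw [if_pos hij, if_pos hij, hij, smul_eq_mul]
      norm_num
    · rw [if_neg hij, if_neg hij]
      simp
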